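/- Let P, Q : Fin n → ℝ³ be point clouds, let w : Fin n → ℝ be nonnegative weights, and for a rigid transform g ∈ SE(3) define the weighted alignment cost c(g; P, Q) := ∑ i, w i * ‖g (P i) − Q i‖². Suppose g* ∈ SE(3) minimizes c(·; P, Q) over SE(3). Then for any rigid transforms T_A, T_B ∈ SE(3), the transform T_B ∘ g* ∘ T_A⁻¹ minimizes c(·; T_A • P, T_B • Q) over SE(3). That is, the set of minimizers of the weighted Procrustes problem satisfies the equivariance PRO(T_A • P, T_B • Q) = T_B ∘ PRO(P, Q) ∘ T_A⁻¹. -/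
import Mathlib


open Matrix

noncomputable section

/-- Points of `ℝ³`, with the Euclidean norm. -/
abbrev R3 : Type := EuclideanSpace ℝ (Fin 3)

/-- The group `SE(3)` of rigid transforms of `ℝ³`: a rotation `R ∈ SO(3)` together with a
translation `t ∈ ℝ³`, acting as `x ↦ R x + t`. -/
structure SE3 : Type where
  R : Matrix (Fin 3) (Fin 3) ℝ
  hR : R ∈ Matrix.specialOrthogonalGroup (Fin 3) ℝ
  t : R3

/-- A rigid transform acts on a point as `x ↦ R x + t`. -/
def SE3.apply (T : SE3) (x : R3) : R3 := Matrix.toEuclideanLin T.R x + T.t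

instance : CoeFun SE3 (fun _ => R3 → R3) := ⟨SE3.apply⟩

/-- Composition of rigid transforms, so that `(T * S) x = T (S x)`. -/
instance : Mul SE3 := ⟨fun T S => ⟨T.R * S.R, mul_mem T.hR S.hR, T.apply S.t⟩⟩

theorem SE3.transpose_mem {A : Matrix (Fin 3) (Fin 3) ℝ}
    (h : A ∈ Matrix.specialOrthogonalGroup (Fin 3) ℝ) :
    Aᵀ ∈ Matrix.specialOrthogonalGroup (Fin 3) ℝ := by
  rw [Matrix.mem_specialOrthogonalGroup_iff] at h ⊢
  refine ⟨?_, by simpa using h.2⟩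
  rw [Matrix.mem_orthogonalGroup_iff]
  have h1 : star A * A = 1 := (Matrix.mem_orthogonalGroup_iff' _ _).mp h.1
  simpa [Matrix.star_eq_conjTranspose, Matrix.conjTranspose_eq_transpose_of_trivial] using h1

/-- The inverse of the rigid transform `x ↦ R x + t` is `x ↦ Rᵀ x - Rᵀ t`. -/
noncomputable instance : Inv SE3 :=
  ⟨fun T => ⟨T.Rᵀ, SE3.transpose_mem T.hR, -(Matrix.toEuclideanLin T.Rᵀ T.t)⟩⟩

/-- `SE(3)` acts pointwise on point clouds. -/
instance {k : ℕ} : SMul SE3 (Fin k → R3) := ⟨fun T P i => T.apply (P i)⟩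

end

open scoped BigOperators

/-- The weighted alignment cost `c(g; P, Q) = ∑ i, w i * ‖g (P i) - Q i‖²`. -/
noncomputable def alignCost {n : ℕ} (w : Fin n → ℝ) (g : SE3) (P Q : Fin n → R3) : ℝ :=
  ∑ i, w i * ‖g (P i) - Q i‖ ^ 2


section Helpers

open Matrix

lemma SE3.R_transpose_mul (T : SE3) : T.Rᵀ * T.R = 1 := by
  have h1 : star T.R * T.R = 1 :=
    (Matrix.mem_orthogonalGroup_iff' _ _).mp
      ((Matrix.mem_specialOrthogonalGroup_iff.mp T.hR).1)
  simpa [Matrix.star_eq_conjTranspose, Matrix.conjTranspose_eq_transpose_of_trivial] using h1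

lemma SE3.R_mul_transpose (T : SE3) : T.R * T.Rᵀ = 1 := by
  have h1 : T.R * star T.R = 1 :=
    (Matrix.mem_orthogonalGroup_iff _ _).mp
      ((Matrix.mem_specialOrthogonalGroup_iff.mp T.hR).1)
  simpa [Matrix.star_eq_conjTranspose, Matrix.conjTranspose_eq_transpose_of_trivial] using h1

lemma SE3.norm_lin (T : SE3) (x : R3) : ‖Matrix.toEuclideanLin T.R x‖ = ‖x‖ := by
  have hadj : Matrix.toEuclideanLin T.Rᵀ = LinearMap.adjoint (Matrix.toEuclideanLin T.R) := by
    rw [← Matrix.toEuclideanLin_conjTranspose_eq_adjoint]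
    simp [Matrix.conjTranspose_eq_transpose_of_trivial]
  have key : Matrix.toEuclideanLin T.Rᵀ (Matrix.toEuclideanLin T.R x) = x := by
    simp [Matrix.toEuclideanLin_apply, Matrix.mulVec_mulVec, T.R_transpose_mul]
  have hsq : ‖Matrix.toEuclideanLin T.R x‖ ^ 2 = ‖x‖ ^ 2 := by
    rw [← real_inner_self_eq_norm_sq, ← real_inner_self_eq_norm_sq,
      ← LinearMap.adjoint_inner_left, ← hadj, key]
  nlinarith [norm_nonneg (Matrix.toEuclideanLin T.R x), norm_nonneg x]

lemma SE3.norm_apply_sub (T : SE3) (x y : R3) : ‖T.apply x - T.apply y‖ = ‖x - y‖ := by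
  have : T.apply x - T.apply y = Matrix.toEuclideanLin T.R (x - y) := by
    simp only [SE3.apply, map_sub]
    abel
  rw [this, T.norm_lin]

lemma Matrix.toEuclideanLin_mul_apply (A B : Matrix (Fin 3) (Fin 3) ℝ) (v : R3) :
    Matrix.toEuclideanLin (A * B) v = Matrix.toEuclideanLin A (Matrix.toEuclideanLin B v) := by
  simp [Matrix.toEuclideanLin_apply, Matrix.mulVec_mulVec]

lemma SE3.mul_apply (T S : SE3) (x : R3) : (T * S).apply x = T.apply (S.apply x) := by
  show SE3.apply ⟨T.R * S.R, _, T.apply S.t⟩ x = _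
  simp only [SE3.apply, map_add, Matrix.toEuclideanLin_mul_apply]
  abel

lemma SE3.inv_apply_apply (T : SE3) (x : R3) : (T⁻¹).apply (T.apply x) = x := by
  show SE3.apply ⟨T.Rᵀ, _, -(Matrix.toEuclideanLin T.Rᵀ T.t)⟩ (T.apply x) = x
  simp only [SE3.apply, map_add, Matrix.toEuclideanLin_apply, Matrix.mulVec_mulVec,
    T.R_transpose_mul]
  ext j
  simp [T.R_transpose_mul, Matrix.one_mulVec]

lemma SE3.apply_inv_apply (T : SE3) (x : R3) : T.apply ((T⁻¹).apply x) = x := by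
  show T.apply (SE3.apply ⟨T.Rᵀ, _, -(Matrix.toEuclideanLin T.Rᵀ T.t)⟩ x) = x
  simp only [SE3.apply, map_add, map_neg, Matrix.toEuclideanLin_apply, Matrix.mulVec_mulVec,
    T.R_mul_transpose]
  ext j
  simp [T.R_mul_transpose, Matrix.one_mulVec]

lemma SE3.smul_apply' {k : ℕ} (T : SE3) (P : Fin k → R3) (i : Fin k) :
    (T • P) i = T.apply (P i) := rfl

lemma alignCost_conj {n : ℕ} (w : Fin n → ℝ) (P Q : Fin n → R3) (TA TB : SE3) (h : SE3) :
    alignCost w (TB * h * TA⁻¹) (TA • P) (TB • Q) = alignCost w h P Q := by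
  unfold alignCost
  refine Finset.sum_congr rfl fun i _ => ?_
  congr 2
  show ‖(TB * h * TA⁻¹).apply ((TA • P) i) - (TB • Q) i‖ = ‖h.apply (P i) - Q i‖
  rw [SE3.smul_apply', SE3.smul_apply', SE3.mul_apply, SE3.mul_apply,
    SE3.inv_apply_apply, SE3.norm_apply_sub]

end Helpers

/-- If `g*` minimizes the weighted alignment cost between `P` and `Q` over `SE(3)`, then
`T_B ∘ g* ∘ T_A⁻¹` minimizes the weighted alignment cost between `T_A • P` and `T_B • Q`:
the weighted Procrustes problem is equivariant. -/
theorem procrustes_minimizer_equivariant {n : ℕ}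
    (P Q : Fin n → R3) (w : Fin n → ℝ) (hw : ∀ i, 0 ≤ w i)
    (gstar : SE3) (hmin : ∀ g : SE3, alignCost w gstar P Q ≤ alignCost w g P Q)
    (TA TB : SE3) :
    ∀ g : SE3, alignCost w (TB * gstar * TA⁻¹) (TA • P) (TB • Q)
      ≤ alignCost w g (TA • P) (TB • Q) := by
  intro g
  have h1 : alignCost w (TB * gstar * TA⁻¹) (TA • P) (TB • Q) = alignCost w gstar P Q :=
    alignCost_conj w P Q TA TB gstar
  have h2 : alignCost w g (TA • P) (TB • Q)
      = alignCost w (TB * (TB⁻¹ * g * TA) * TA⁻¹) (TA • P) (TB • Q) := by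
    unfold alignCost
    refine Finset.sum_congr rfl fun i _ => ?_
    congr 3
    show g.apply ((TA • P) i) - (TB • Q) i
      = (TB * (TB⁻¹ * g * TA) * TA⁻¹).apply ((TA • P) i) - (TB • Q) i
    rw [SE3.smul_apply', SE3.mul_apply, SE3.mul_apply, SE3.mul_apply, SE3.mul_apply,
      SE3.inv_apply_apply, SE3.apply_inv_apply]
  rw [h1, h2, alignCost_conj]
  exact hmin _
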